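/- arXiv:2206.07503 — 4 statements merged into one kernel-verified Lean document; each statement's English description precedes it below -/
import Mathlib

section
/- Consider the Two-Choice process without noise: the probability allocation vector is p_i = (2i−1)/n^2 for the i-th most loaded bin, and the normalized loads y_1^t ≥ y_2^t ≥ ... ≥ y_n^t satisfy ∑_i y_i^t = 0. Let Δ^t = ∑_{i=1}^n |y_i^t|. Then ∑_{i=1}^n 2·p_i·y_i^t ≤ −Δ^t/n. -/
private lemma sum_odds (k : ℕ) : ∑ i ∈ Finset.range k, (2 * (i : ℝ) + 1) = (k : ℝ) ^ 2 := by
  induction k with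
  | zero => simp
  | succ m ih => rw [Finset.sum_range_succ, ih]; push_cast; ring

/-- For the Two-Choice probability vector `p_i = (2 i - 1) / n ^ 2` (with
`i = 1, …, n` and loads sorted non-increasingly, sum zero),
`∑ 2 p_i y_i ≤ - Δ / n` where `Δ = ∑ |y_i|`. -/
theorem stmt4 (n : ℕ) (hn : 0 < n) (y : Fin n → ℝ)
    (hsort : ∀ i j : Fin n, i ≤ j → y j ≤ y i)
    (hsum : ∑ i, y i = 0) :
    ∑ i : Fin n, 2 * ((2 * ((i : ℕ) : ℝ) + 1) / (n : ℝ) ^ 2) * y i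
      ≤ -(∑ i, |y i|) / n := by
  classical
  set P : Fin n → ℝ := fun i => 2 * ((i : ℕ) : ℝ) + 1 with hP
  set S : Finset (Fin n) := Finset.univ.filter (fun i => 0 ≤ y i) with hSdef
  set k := S.card with hk
  have hkn : k ≤ n := by
    simpa using Finset.card_le_card (Finset.subset_univ S)
  -- membership characterization
  have hmem : ∀ i : Fin n, i ∈ S ↔ (i : ℕ) < k := by
    intro i
    constructor
    · intro hi
      have hsub : Finset.Iic i ⊆ S := by
        intro j hj
        simp only [Finset.mem_Iic] at hj
        simp only [hSdef, Finset.mem_filter, Finset.mem_univ, true_and]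
        have := hsort j i hj
        have hyi : 0 ≤ y i := by
          simpa only [hSdef, Finset.mem_filter, Finset.mem_univ, true_and] using hi
        linarith
      have := Finset.card_le_card hsub
      rw [Fin.card_Iic] at this
      omega
    · intro hi
      by_contra hne
      have hyi : y i < 0 := by
        simp only [hSdef, Finset.mem_filter, Finset.mem_univ, true_and] at hne
        linarith [lt_of_not_ge hne]
      have hsub : S ⊆ Finset.Iio i := by
        intro j hj
        have hyj : 0 ≤ y j := by
          simpa only [hSdef, Finset.mem_filter, Finset.mem_univ, true_and] using hj
        simp only [Finset.mem_Iio]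
        by_contra hle
        have := hsort i j (le_of_not_gt hle)
        linarith
      have := Finset.card_le_card hsub
      rw [Fin.card_Iio] at this
      omega
  -- S as map of Fin k
  have hSP : ∑ i ∈ S, P i = (k : ℝ) ^ 2 := by
    have hS : S = Finset.map (Fin.castLEEmb hkn) Finset.univ := by
      ext i
      rw [hmem i]
      simp only [Finset.mem_map, Finset.mem_univ, true_and, Fin.castLEEmb, Fin.castLE]
      constructor
      · intro hi; exact ⟨⟨i, hi⟩, by ext; simp⟩
      · rintro ⟨j, rfl⟩; simpa using j.isLt
    rw [hS, Finset.sum_map]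
    have : ∀ j : Fin k, P (Fin.castLEEmb hkn j) = 2 * ((j : ℕ) : ℝ) + 1 := by
      intro j; simp [hP, Fin.castLEEmb, Fin.castLE]
    rw [Finset.sum_congr rfl (fun j _ => this j), Fin.sum_univ_eq_sum_range
      (fun i => 2 * (i : ℝ) + 1), sum_odds]
  have hUnivP : ∑ i : Fin n, P i = (n : ℝ) ^ 2 := by
    rw [hP, Fin.sum_univ_eq_sum_range (fun i => 2 * (i : ℝ) + 1), sum_odds]
  have hTP : ∑ i ∈ Sᶜ, P i = (n : ℝ) ^ 2 - (k : ℝ) ^ 2 := by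
    have := Finset.sum_add_sum_compl S P
    rw [hSP, hUnivP] at this
    linarith
  set a : ℝ := ∑ i ∈ S, y i with ha
  have haT : ∑ i ∈ Sᶜ, y i = -a := by
    have := Finset.sum_add_sum_compl S y
    rw [hsum] at this
    linarith
  have hanneg : 0 ≤ a := Finset.sum_nonneg (fun i hi => by
    simpa only [hSdef, Finset.mem_filter, Finset.mem_univ, true_and] using hi)
  have habs : ∑ i, |y i| = 2 * a := by
    have h1 : ∑ i ∈ S, |y i| = a := by
      apply Finset.sum_congr rfl
      intro i hi
      exact abs_of_nonneg (by simpa only [hSdef, Finset.mem_filter, Finset.mem_univ,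
        true_and] using hi)
    have h2 : ∑ i ∈ Sᶜ, |y i| = a := by
      rw [show a = -∑ i ∈ Sᶜ, y i by linarith, ← Finset.sum_neg_distrib]
      apply Finset.sum_congr rfl
      intro i hi
      simp only [Finset.mem_compl, hSdef, Finset.mem_filter, Finset.mem_univ, true_and] at hi
      exact abs_of_neg (lt_of_not_ge hi)
    have := Finset.sum_add_sum_compl S (fun i => |y i|)
    rw [h1, h2] at this
    linarith
  -- Antivary
  have hA : Antivary P y := by
    intro i j hij
    have hji : j < i := by
      by_contra h
      exact absurd (hsort i j (le_of_not_gt h)) (not_le.mpr hij)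
    have : (j : ℕ) ≤ (i : ℕ) := le_of_lt hji
    simp only [hP]
    have : ((j : ℕ) : ℝ) ≤ ((i : ℕ) : ℝ) := Nat.cast_le.mpr this
    linarith
  have cheb1 : (k : ℝ) * ∑ i ∈ S, P i * y i ≤ (∑ i ∈ S, P i) * ∑ i ∈ S, y i := by
    simpa [hk] using (hA.antivaryOn ↑S).card_mul_sum_le_sum_mul_sum
  have cheb2 : ((n - k : ℕ) : ℝ) * ∑ i ∈ Sᶜ, P i * y i
      ≤ (∑ i ∈ Sᶜ, P i) * ∑ i ∈ Sᶜ, y i := by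
    have hcard : (Sᶜ : Finset (Fin n)).card = n - k := by
      rw [Finset.card_compl, Fintype.card_fin, hk]
    simpa [hcard] using (hA.antivaryOn ↑Sᶜ).card_mul_sum_le_sum_mul_sum
  -- rewrite goal
  have hgoal : ∑ i : Fin n, 2 * ((2 * ((i : ℕ) : ℝ) + 1) / (n : ℝ) ^ 2) * y i
      = (2 / (n : ℝ) ^ 2) * ((∑ i ∈ S, P i * y i) + ∑ i ∈ Sᶜ, P i * y i) := by
    rw [Finset.sum_add_sum_compl S (fun i => P i * y i), Finset.mul_sum]
    apply Finset.sum_congr rfl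
    intro i _
    simp only [hP]
    ring
  rw [hgoal, habs]
  have hnpos : (0 : ℝ) < n := Nat.cast_pos.mpr hn
  -- case split on k = n
  rcases eq_or_lt_of_le hkn with hkeq | hklt
  · -- all y nonneg hence all zero
    have hSall : S = Finset.univ := Finset.eq_univ_of_card S (by rw [← hk, hkeq, Fintype.card_fin])
    have hzero : ∀ i ∈ Finset.univ, y i = 0 := by
      rw [← Finset.sum_eq_zero_iff_of_nonneg]
      · exact hsum
      · intro i _
        have : i ∈ S := hSall ▸ Finset.mem_univ i
        simpa only [hSdef, Finset.mem_filter, Finset.mem_univ, true_and] using this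
    have ha0 : a = 0 := by
      rw [ha]; exact Finset.sum_eq_zero (fun i hi => hzero i (Finset.mem_univ i))
    have h1 : ∑ i ∈ S, P i * y i = 0 :=
      Finset.sum_eq_zero (fun i hi => by rw [hzero i (Finset.mem_univ i), mul_zero])
    have h2 : ∑ i ∈ Sᶜ, P i * y i = 0 :=
      Finset.sum_eq_zero (fun i hi => by rw [hzero i (Finset.mem_univ i), mul_zero])
    rw [h1, h2, ha0]
    norm_num
  · -- k < n, and k ≥ 1
    have hk1 : 1 ≤ k := by
      have h0 : (⟨0, hn⟩ : Fin n) ∈ S := by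
        rw [hSdef, Finset.mem_filter]
        refine ⟨Finset.mem_univ _, ?_⟩
        by_contra h
        have hneg : ∀ i : Fin n, y i < 0 := by
          intro i
          have := hsort ⟨0, hn⟩ i (by simp [Fin.le_def])
          linarith [lt_of_not_ge h]
        have hne : Nonempty (Fin n) := ⟨⟨0, hn⟩⟩
        have : ∑ i, y i < 0 :=
          Finset.sum_neg (fun i _ => hneg i) (Finset.univ_nonempty)
        linarith
      have : S.Nonempty := ⟨_, h0⟩
      exact Finset.card_pos.mpr this
    have hkpos : (0 : ℝ) < k := by exact_mod_cast hk1
    have hmkpos : (0 : ℝ) < ((n - k : ℕ) : ℝ) := by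
      have : 0 < n - k := by omega
      exact_mod_cast this
    rw [hSP] at cheb1
    rw [hTP, haT] at cheb2
    -- from cheb1: ∑_S P*y ≤ k * a
    have hb1 : ∑ i ∈ S, P i * y i ≤ (k : ℝ) * a := by
      rw [← ha] at cheb1
      have : (k : ℝ) * ∑ i ∈ S, P i * y i ≤ (k : ℝ) * ((k : ℝ) * a) := by
        calc (k : ℝ) * ∑ i ∈ S, P i * y i ≤ (k : ℝ) ^ 2 * a := cheb1
        _ = (k : ℝ) * ((k : ℝ) * a) := by ring
      exact le_of_mul_le_mul_left this hkpos
    have hb2 : ∑ i ∈ Sᶜ, P i * y i ≤ -(((n : ℝ) + k) * a) := by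
      have hcast : ((n - k : ℕ) : ℝ) = (n : ℝ) - k := by
        have : k ≤ n := hkn
        push_cast [Nat.cast_sub this]
        ring
      have key : ((n - k : ℕ) : ℝ) * ∑ i ∈ Sᶜ, P i * y i
          ≤ ((n - k : ℕ) : ℝ) * (-(((n : ℝ) + k) * a)) := by
        calc ((n - k : ℕ) : ℝ) * ∑ i ∈ Sᶜ, P i * y i
            ≤ ((n : ℝ) ^ 2 - (k : ℝ) ^ 2) * (-a) := cheb2
          _ = ((n - k : ℕ) : ℝ) * (-(((n : ℝ) + k) * a)) := by rw [hcast]; ring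
      exact le_of_mul_le_mul_left key hmkpos
    have hsum2 : (∑ i ∈ S, P i * y i) + ∑ i ∈ Sᶜ, P i * y i ≤ -((n : ℝ) * a) := by
      calc (∑ i ∈ S, P i * y i) + ∑ i ∈ Sᶜ, P i * y i
          ≤ (k : ℝ) * a + -(((n : ℝ) + k) * a) := add_le_add hb1 hb2
        _ = -((n : ℝ) * a) := by ring
    calc (2 / (n : ℝ) ^ 2) * ((∑ i ∈ S, P i * y i) + ∑ i ∈ Sᶜ, P i * y i)
        ≤ (2 / (n : ℝ) ^ 2) * (-((n : ℝ) * a)) := by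
          apply mul_le_mul_of_nonneg_left hsum2
          positivity
      _ = -(2 * a) / n := by field_simp
end

section
/- Let α ∈ (0,1), c_4 > 0, g ≥ 1 be given, and for a vector y ∈ R^n define Λ_i = exp(α·(y_i − c_4 g)^+) + exp(α·(−y_i − c_4 g)^+) and Λ = ∑_i Λ_i. If Λ ≤ ĉ·n for some ĉ > 0, then ∑_{i=1}^n y_i^2 ≤ c_s·n·g^2, where c_s = 4ĉ·û^2 + 4c_4^2 with û = (4/α)·log(4/α). -/
/-- Key pointwise bound: for `u ≥ 0`, `u ^ 2 ≤ û ^ 2 * exp (α u)`. -/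
lemma sq_le_uhat_sq_mul_exp (α u : ℝ) (hα0 : 0 < α) (hα1 : α < 1) (hu : 0 ≤ u) :
    u ^ 2 ≤ (4 / α * Real.log (4 / α)) ^ 2 * Real.exp (α * u) := by
  set A := 4 / α with hA
  have hA4 : (4:ℝ) < A := by
    rw [hA, lt_div_iff₀ hα0]; nlinarith
  have hA0 : 0 < A := by linarith
  have hlogA : 1 < Real.log A := by
    have he : Real.exp 1 < A := by
      have := Real.exp_one_lt_d9; linarith
    calc (1:ℝ) = Real.log (Real.exp 1) := (Real.log_exp 1).symm
      _ < Real.log A := Real.log_lt_log (Real.exp_pos 1) he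
  set uhat := A * Real.log A with huh
  have huhat1 : 1 ≤ uhat := by nlinarith
  have hexp1 : 1 ≤ Real.exp (α * u) := Real.one_le_exp (by positivity)
  rcases le_total u uhat with h | h
  · nlinarith [sq_nonneg uhat]
  · -- large u : u ^ 2 ≤ exp (α u)
    have hsplit : Real.exp (α * u)
        = Real.exp (α * u / 4) * Real.exp (α * u / 4) * Real.exp (α * u / 2) := by
      rw [← Real.exp_add, ← Real.exp_add]; ring_nf
    have h1 : α * u / 4 ≤ Real.exp (α * u / 4) := by
      have := Real.add_one_le_exp (α * u / 4)
      nlinarith [mul_nonneg hα0.le hu]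
    have h2 : Real.exp (α * uhat / 2) ≤ Real.exp (α * u / 2) := by
      apply Real.exp_le_exp.2
      have : α * uhat ≤ α * u := by nlinarith
      linarith
    have h3 : Real.exp (α * uhat / 2) = A ^ 2 := by
      have : α * uhat / 2 = 2 * Real.log A := by
        rw [huh, hA]; field_simp; ring
      rw [this, show (2:ℝ) * Real.log A = Real.log A + Real.log A by ring,
        Real.exp_add, Real.exp_log hA0]; ring
    have h4 : u ^ 2 ≤ Real.exp (α * u) := by
      rw [hsplit]
      have hq : (α * u / 4) * (α * u / 4) * A ^ 2 = u ^ 2 := by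
        rw [hA]; field_simp
      have he0 : (0:ℝ) < Real.exp (α * u / 4) := Real.exp_pos _
      have hu4 : 0 ≤ α * u / 4 := by positivity
      calc u ^ 2 = (α * u / 4) * (α * u / 4) * A ^ 2 := hq.symm
        _ = (α * u / 4) * (α * u / 4) * Real.exp (α * uhat / 2) := by rw [h3]
        _ ≤ Real.exp (α * u / 4) * Real.exp (α * u / 4) * Real.exp (α * u / 2) := by
            have hm : (α * u / 4) * (α * u / 4)
                ≤ Real.exp (α * u / 4) * Real.exp (α * u / 4) :=
              mul_le_mul h1 h1 hu4 he0.le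
            exact mul_le_mul hm h2 (Real.exp_pos _).le
              (mul_nonneg he0.le he0.le)
    have h5 : Real.exp (α * u) ≤ uhat ^ 2 * Real.exp (α * u) :=
      le_mul_of_one_le_left (Real.exp_pos _).le (by nlinarith)
    linarith

/-- If the hyperbolic-cosine-type potential with offset `c₄ g` satisfies
`Λ ≤ cHat n`, then the quadratic potential is at most `c_s n g ^ 2` with
`c_s = 4 cHat û ^ 2 + 4 c₄ ^ 2`, `û = (4/α) log (4/α)`. -/
theorem stmt9 (n : ℕ) (α c₄ g cHat : ℝ) (hα0 : 0 < α) (hα1 : α < 1)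
    (hc₄ : 0 < c₄) (hg : 1 ≤ g) (hcHat : 0 < cHat) (y : Fin n → ℝ)
    (hΛ : ∑ i, (Real.exp (α * max (y i - c₄ * g) 0)
        + Real.exp (α * max (-(y i) - c₄ * g) 0)) ≤ cHat * n) :
    ∑ i, (y i) ^ 2
      ≤ (4 * cHat * (4 / α * Real.log (4 / α)) ^ 2 + 4 * c₄ ^ 2) * n * g ^ 2 := by
  set uhat := 4 / α * Real.log (4 / α) with huh
  have huhat0 : 0 ≤ uhat ^ 2 := sq_nonneg _
  have key : ∀ i : Fin n, (y i) ^ 2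
      ≤ 2 * uhat ^ 2 * (Real.exp (α * max (y i - c₄ * g) 0)
          + Real.exp (α * max (-(y i) - c₄ * g) 0)) + 2 * (c₄ * g) ^ 2 := by
    intro i
    set u := max (|y i| - c₄ * g) 0 with hu
    have hu0 : 0 ≤ u := le_max_right _ _
    have habs : |y i| ≤ u + c₄ * g := by
      have := le_max_left (|y i| - c₄ * g) 0
      linarith
    have hy2 : (y i) ^ 2 ≤ 2 * u ^ 2 + 2 * (c₄ * g) ^ 2 := by
      have h5 : |y i| ^ 2 ≤ (u + c₄ * g) ^ 2 :=
        pow_le_pow_left₀ (abs_nonneg _) habs 2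
      nlinarith [sq_abs (y i), sq_nonneg (u - c₄ * g)]
    have husq : u ^ 2 ≤ uhat ^ 2 * Real.exp (α * u) :=
      sq_le_uhat_sq_mul_exp α u hα0 hα1 hu0
    have hexple : Real.exp (α * u) ≤ Real.exp (α * max (y i - c₄ * g) 0)
        + Real.exp (α * max (-(y i) - c₄ * g) 0) := by
      rcases abs_cases (y i) with ⟨h1, _⟩ | ⟨h1, _⟩
      · have : u = max (y i - c₄ * g) 0 := by rw [hu, h1]
        rw [this]
        nlinarith [Real.exp_pos (α * max (-(y i) - c₄ * g) 0)]
      · have : u = max (-(y i) - c₄ * g) 0 := by rw [hu, h1]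
        rw [this]
        nlinarith [Real.exp_pos (α * max (y i - c₄ * g) 0)]
    nlinarith
  have hsum : ∑ i, (y i) ^ 2
      ≤ 2 * uhat ^ 2 * (∑ i, (Real.exp (α * max (y i - c₄ * g) 0)
          + Real.exp (α * max (-(y i) - c₄ * g) 0))) + 2 * (c₄ * g) ^ 2 * n := by
    calc ∑ i, (y i) ^ 2
        ≤ ∑ i, (2 * uhat ^ 2 * (Real.exp (α * max (y i - c₄ * g) 0)
            + Real.exp (α * max (-(y i) - c₄ * g) 0)) + 2 * (c₄ * g) ^ 2) :=
          Finset.sum_le_sum fun i _ => key i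
      _ = _ := by
          rw [Finset.sum_add_distrib, ← Finset.mul_sum, Finset.sum_const]
          simp [mul_comm]
  have hΛ' : 2 * uhat ^ 2 * (∑ i, (Real.exp (α * max (y i - c₄ * g) 0)
      + Real.exp (α * max (-(y i) - c₄ * g) 0))) ≤ 2 * uhat ^ 2 * (cHat * n) := by
    apply mul_le_mul_of_nonneg_left hΛ (by positivity)
  have hn : (0:ℝ) ≤ (n:ℝ) := Nat.cast_nonneg n
  have hg2 : 1 ≤ g ^ 2 := by nlinarith
  nlinarith [mul_nonneg (mul_nonneg hcHat.le huhat0) hn, sq_nonneg c₄,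
    mul_nonneg (mul_nonneg (sq_nonneg c₄) hn) (by nlinarith : (0:ℝ) ≤ g ^ 2 - 1),
    mul_nonneg (mul_nonneg (mul_nonneg hcHat.le huhat0) hn) (by nlinarith : (0:ℝ) ≤ g ^ 2 - 1)]
end

section
/- Consider an allocation process with probability allocation vector q^s at step s, and the super-exponential potential Φ^s = ∑_{i=1}^n exp(φ·(y_i^s − z)^+) with integer offset z > 0 and smoothing parameter φ ∈ [4, n]. Suppose at step s the event K^s holds: every bin i with y_i^s ≥ z − 1 satisfies q_i^s ≤ (1/n)·e^{−φ}. Then E[Φ^{s+1} | F^s, K^s] ≤ Φ^s·(1 − 1/n) + 2. -/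
lemma exp_neg_le_aux (x : ℝ) (hx0 : 0 ≤ x) (hx1 : x ≤ 1) :
    Real.exp (-x) ≤ 1 - x / 2 := by
  have h := Real.add_one_le_exp x
  have h1 : Real.exp (-x) * Real.exp x = 1 := by
    rw [← Real.exp_add]; simp
  have h2 : 0 < Real.exp (-x) := Real.exp_pos _
  nlinarith [sq_nonneg x, Real.exp_pos x]

set_option maxHeartbeats 1000000 in
lemma bin_bound (n : ℕ) (hn : 0 < n) (z : ℤ) (φ : ℝ)
    (hφ4 : 4 ≤ φ) (hφn : φ ≤ n) (a qa : ℝ)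
    (hq0 : 0 ≤ qa)
    (hlat : (z : ℝ) < a → (z : ℝ) + 1 / n ≤ a)
    (hK : (z : ℝ) - 1 ≤ a → qa ≤ 1 / n * Real.exp (-φ)) :
    qa * Real.exp (φ * max (a + 1 - 1 / n - z) 0)
      + (1 - qa) * Real.exp (φ * max (a - 1 / n - z) 0)
      ≤ Real.exp (φ * max (a - z) 0) * (1 - 1 / n) + 2 / n := by
  have hn' : (0 : ℝ) < n := Nat.cast_pos.mpr hn
  have hN : (0 : ℝ) < 1 / n := by positivity
  have hφ0 : (0 : ℝ) < φ := by linarith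
  have hφN : φ * (1 / n) ≤ 1 := by
    rw [mul_one_div, div_le_one hn']; exact hφn
  have h2N : (2 : ℝ) / n = 2 * (1 / n) := by ring
  rcases le_or_gt a z with hle | hgt
  · have hE : max (a - (z : ℝ)) 0 = 0 := max_eq_right (by linarith)
    have hE1 : max (a - 1 / n - (z : ℝ)) 0 = 0 := max_eq_right (by linarith)
    rcases le_or_gt ((z : ℝ) - 1) a with hmid | hlow
    · have hq := hK hmid
      have hm : max (a + 1 - 1 / n - (z : ℝ)) 0 ≤ 1 :=
        max_le (by linarith) (by norm_num)
      have hm0 : 0 ≤ max (a + 1 - 1 / n - (z : ℝ)) 0 := le_max_right _ _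
      have hexp : Real.exp (φ * max (a + 1 - 1 / n - (z : ℝ)) 0) ≤ Real.exp φ := by
        apply Real.exp_le_exp.mpr
        nlinarith
      have hqe : qa * Real.exp φ ≤ 1 / n := by
        calc qa * Real.exp φ ≤ (1 / n * Real.exp (-φ)) * Real.exp φ :=
              mul_le_mul_of_nonneg_right hq (Real.exp_pos φ).le
          _ = 1 / n := by rw [mul_assoc, ← Real.exp_add]; simp
      rw [hE, hE1]
      simp only [mul_zero, Real.exp_zero]
      rw [h2N]
      nlinarith [mul_le_mul_of_nonneg_left hexp hq0]
    · have hE2 : max (a + 1 - 1 / n - (z : ℝ)) 0 = 0 := max_eq_right (by linarith)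
      rw [hE, hE1, hE2]
      simp only [mul_zero, Real.exp_zero]
      rw [h2N]
      nlinarith
  · have hla := hlat hgt
    have hq := hK (by linarith)
    have h1 : max (a - (z : ℝ)) 0 = a - z := max_eq_left (by linarith)
    have h2 : max (a - 1 / n - (z : ℝ)) 0 = a - 1 / n - z := max_eq_left (by linarith)
    have h3 : max (a + 1 - 1 / n - (z : ℝ)) 0 = a + 1 - 1 / n - z := max_eq_left (by linarith)
    rw [h1, h2, h3]
    set P := Real.exp (φ * (a - (z : ℝ))) with hP
    set c := Real.exp (-(φ * (1 / n))) with hc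
    have e1 : Real.exp (φ * (a - 1 / n - (z : ℝ))) = P * c := by
      rw [hP, hc, ← Real.exp_add]; congr 1; ring
    have e2 : Real.exp (φ * (a + 1 - 1 / n - (z : ℝ))) = P * c * Real.exp φ := by
      rw [hP, hc, ← Real.exp_add, ← Real.exp_add]; congr 1; ring
    rw [e1, e2]
    have hP0 : 0 < P := Real.exp_pos _
    have hc0 : 0 < c := Real.exp_pos _
    have hcle : c ≤ 1 - φ * (1 / n) / 2 :=
      exp_neg_le_aux _ (by positivity) hφN
    have hqe : qa * Real.exp φ ≤ 1 / n := by
      calc qa * Real.exp φ ≤ (1 / n * Real.exp (-φ)) * Real.exp φ :=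
            mul_le_mul_of_nonneg_right hq (Real.exp_pos φ).le
        _ = 1 / n := by rw [mul_assoc, ← Real.exp_add]; simp
    have hinner : (1 - qa) + qa * Real.exp φ ≤ 1 + 1 / n := by nlinarith
    have hinner0 : 0 ≤ (1 - qa) + qa * Real.exp φ := by
      have : qa ≤ 1 := by
        have he : Real.exp (-φ) ≤ 1 := Real.exp_le_one_iff.mpr (by linarith)
        nlinarith
      nlinarith [mul_nonneg hq0 (Real.exp_pos φ).le]
    have hscal : c * (1 + 1 / n) ≤ 1 - 1 / n := by
      have h4N : 4 * (1 / n) ≤ φ * (1 / n) :=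
        mul_le_mul_of_nonneg_right hφ4 hN.le
      have step1 : c * (1 + 1 / n) ≤ (1 - φ * (1 / n) / 2) * (1 + 1 / n) :=
        mul_le_mul_of_nonneg_right hcle (by positivity)
      have step2 : (1 - φ * (1 / n) / 2) * (1 + 1 / n) ≤ (1 - 2 * (1 / n)) * (1 + 1 / n) :=
        mul_le_mul_of_nonneg_right (by linarith) (by positivity)
      have step3 : (1 - 2 * (1 / (n:ℝ))) * (1 + 1 / (n:ℝ)) ≤ 1 - 1 / (n:ℝ) := by
        nlinarith [mul_pos hN hN]
      linarith
    have key : P * c * ((1 - qa) + qa * Real.exp φ) ≤ P * (1 - 1 / n) := by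
      calc P * c * ((1 - qa) + qa * Real.exp φ)
          ≤ P * c * (1 + 1 / n) :=
            mul_le_mul_of_nonneg_left hinner (by positivity)
        _ = P * (c * (1 + 1 / n)) := by ring
        _ ≤ P * (1 - 1 / n) := mul_le_mul_of_nonneg_left hscal hP0.le
    have hre : qa * (P * c * Real.exp φ) + (1 - qa) * (P * c)
        = P * c * ((1 - qa) + qa * Real.exp φ) := by ring
    have h20 : (0 : ℝ) ≤ 2 / n := by positivity
    rw [hre]
    linarith

set_option maxHeartbeats 1000000


/-- General drop inequality for the super-exponential potential
`Φ = ∑ exp(φ (y_i - z)⁺)` with integer offset `z > 0` and `φ ∈ [4, n]`: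
if every bin `i` with `y_i ≥ z - 1` has allocation probability
`q_i ≤ e^{-φ}/n`, then the expected potential after one allocation step
is at most `Φ (1 - 1/n) + 2`. Normalized loads live on a `1/n`-lattice,
so `y_i > z` implies `y_i ≥ z + 1/n`. -/
theorem stmt14 (n : ℕ) (hn : 0 < n) (z : ℤ) (hz : 0 < z) (φ : ℝ)
    (hφ4 : 4 ≤ φ) (hφn : φ ≤ n)
    (y : Fin n → ℝ) (q : Fin n → ℝ)
    (hq0 : ∀ i, 0 ≤ q i) (hq1 : ∑ i, q i = 1)
    (hlat : ∀ i, (z : ℝ) < y i → (z : ℝ) + 1 / n ≤ y i)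
    (hK : ∀ i, (z : ℝ) - 1 ≤ y i → q i ≤ 1 / n * Real.exp (-φ)) :
    ∑ i : Fin n, q i *
        (∑ j : Fin n,
          Real.exp (φ * max (y j + (if j = i then 1 else 0) - 1 / n - z) 0))
      ≤ (∑ j : Fin n, Real.exp (φ * max (y j - z) 0)) * (1 - 1 / n) + 2 := by
  have hn' : (0 : ℝ) < n := Nat.cast_pos.mpr hn
  have swap : ∑ i : Fin n, q i *
        (∑ j : Fin n,
          Real.exp (φ * max (y j + (if j = i then 1 else 0) - 1 / n - z) 0))
      = ∑ j : Fin n, ∑ i : Fin n,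
          q i * Real.exp (φ * max (y j + (if j = i then 1 else 0) - 1 / n - z) 0) := by
    simp_rw [Finset.mul_sum]
    exact Finset.sum_comm
  rw [swap]
  have inner : ∀ j : Fin n, ∑ i : Fin n,
        q i * Real.exp (φ * max (y j + (if j = i then 1 else 0) - 1 / n - z) 0)
      = q j * Real.exp (φ * max (y j + 1 - 1 / n - z) 0)
        + (1 - q j) * Real.exp (φ * max (y j - 1 / n - z) 0) := by
    intro j
    rw [← Finset.add_sum_erase _ _ (Finset.mem_univ j)]
    have hj : (if j = j then (1 : ℝ) else 0) = 1 := if_pos rfl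
    have hrest : ∀ i ∈ Finset.univ.erase j,
        q i * Real.exp (φ * max (y j + (if j = i then 1 else 0) - 1 / n - z) 0)
          = q i * Real.exp (φ * max (y j - 1 / n - z) 0) := by
      intro i hi
      have hne : i ≠ j := Finset.ne_of_mem_erase hi
      rw [if_neg (fun h => hne h.symm)]
      ring_nf
    rw [Finset.sum_congr rfl hrest, ← Finset.sum_mul]
    have hsum : ∑ i ∈ Finset.univ.erase j, q i = 1 - q j := by
      have h := Finset.add_sum_erase Finset.univ q (Finset.mem_univ j)
      rw [hq1] at h
      linarith
    rw [hsum, hj]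
  simp_rw [inner]
  have hper : ∀ j : Fin n,
      q j * Real.exp (φ * max (y j + 1 - 1 / n - z) 0)
        + (1 - q j) * Real.exp (φ * max (y j - 1 / n - z) 0)
      ≤ Real.exp (φ * max (y j - z) 0) * (1 - 1 / n) + 2 / n := fun j =>
    bin_bound n hn z φ hφ4 hφn (y j) (q j) (hq0 j) (hlat j) (hK j)
  calc ∑ j : Fin n, (q j * Real.exp (φ * max (y j + 1 - 1 / n - z) 0)
        + (1 - q j) * Real.exp (φ * max (y j - 1 / n - z) 0))
      ≤ ∑ j : Fin n, (Real.exp (φ * max (y j - z) 0) * (1 - 1 / n) + 2 / n) :=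
        Finset.sum_le_sum fun j _ => hper j
    _ = (∑ j : Fin n, Real.exp (φ * max (y j - z) 0)) * (1 - 1 / n) + 2 := by
        rw [Finset.sum_add_distrib, ← Finset.sum_mul, Finset.sum_const,
          Finset.card_univ, Fintype.card_fin, nsmul_eq_mul]
        congr 1
        field_simp
end

section
/- Consider a process where at each step one ball is allocated to a bin i with probability r_i^t satisfying max_i r_i^t ≤ 2/n. For α ∈ (0, 1/2], g ≥ 1, c_4 > 0 define Λ_i^t = exp(α(y_i^t − c_4g)^+) + exp(α(−y_i^t − c_4g)^+). Then for every step t and every bin i, E[Λ_i^{t+1} | F^t] ≤ Λ_i^t·(1 + 3α/n). -/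
lemma exp_half_lt : Real.exp (1/2) < 7/4 := by
  have h : Real.exp (1/2) * Real.exp (1/2) = Real.exp 1 := by
    rw [← Real.exp_add]; norm_num
  nlinarith [Real.exp_pos (1/2 : ℝ), Real.exp_one_lt_d9]

lemma exp_le_lin {u : ℝ} (h0 : 0 ≤ u) (h1 : u ≤ 1/2) :
    Real.exp u ≤ 1 + 1.5 * u := by
  have ha : (0:ℝ) ≤ 1 - 2*u := by linarith
  have hb : (0:ℝ) ≤ 2*u := by linarith
  have hab : (1 - 2*u) + 2*u = 1 := by ring
  have hc := convexOn_exp.2 (Set.mem_univ (0:ℝ)) (Set.mem_univ (1/2:ℝ)) ha hb hab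
  simp only [smul_eq_mul] at hc
  rw [show (1 - 2*u) * (0:ℝ) + 2*u * (1/2:ℝ) = u from by ring] at hc
  have h2 := exp_half_lt
  nlinarith [Real.exp_zero, hc]

set_option maxHeartbeats 1600000 in
/-- Per-bin expected increase of the hyperbolic-cosine-type potential `Λ_i`
for a process with `max_i r_i ≤ 2/n`: with probability `r_i` bin `i` receives
a ball (`y_i ↦ y_i + 1 - 1/n`), otherwise `y_i ↦ y_i - 1/n`; then
`E[Λ_i'] ≤ Λ_i (1 + 3α/n)`. -/
theorem stmt19 (n : ℕ) (hn : 0 < n) (α c₄ g : ℝ)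
    (hα0 : 0 < α) (hα : α ≤ 1 / 2) (hg : 1 ≤ g) (hc₄ : 0 < c₄)
    (y r : Fin n → ℝ) (hr0 : ∀ i, 0 ≤ r i) (hr1 : ∑ i, r i = 1)
    (hrmax : ∀ i, r i ≤ 2 / n) (i : Fin n) :
    r i * (Real.exp (α * max (y i + 1 - 1 / n - c₄ * g) 0)
        + Real.exp (α * max (-(y i + 1 - 1 / n) - c₄ * g) 0))
      + (1 - r i) * (Real.exp (α * max (y i - 1 / n - c₄ * g) 0)
        + Real.exp (α * max (-(y i - 1 / n) - c₄ * g) 0))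
      ≤ (Real.exp (α * max (y i - c₄ * g) 0)
        + Real.exp (α * max (-(y i) - c₄ * g) 0)) * (1 + 3 * α / n) := by
  have hn1 : (1:ℝ) ≤ n := by exact_mod_cast hn
  have hnpos : (0:ℝ) < n := by linarith
  have hinv : 0 < 1 / (n:ℝ) := by positivity
  have hinv1 : 1 / (n:ℝ) ≤ 1 := by
    rw [div_le_one hnpos]; exact hn1
  set A := Real.exp (α * max (y i - c₄ * g) 0) with hA
  set B := Real.exp (α * max (-(y i) - c₄ * g) 0) with hB
  have hApos : 0 < A := Real.exp_pos _
  have hBpos : 0 < B := Real.exp_pos _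
  have hmaxA : 0 ≤ max (y i - c₄ * g) 0 := le_max_right _ _
  have hmaxB : 0 ≤ max (-(y i) - c₄ * g) 0 := le_max_right _ _
  -- bound exps
  have h1 : Real.exp (α * max (y i + 1 - 1 / n - c₄ * g) 0) ≤ A * Real.exp α := by
    rw [← Real.exp_add]
    apply Real.exp_le_exp.2
    have : max (y i + 1 - 1 / n - c₄ * g) 0 ≤ max (y i - c₄ * g) 0 + 1 := by
      apply max_le
      · have := le_max_left (y i - c₄ * g) 0; linarith
      · linarith
    nlinarith
  have h3 : Real.exp (α * max (y i - 1 / n - c₄ * g) 0) ≤ A := by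
    apply Real.exp_le_exp.2
    have : max (y i - 1 / n - c₄ * g) 0 ≤ max (y i - c₄ * g) 0 := by
      apply max_le
      · have := le_max_left (y i - c₄ * g) 0; linarith
      · exact hmaxA
    nlinarith
  have h2 : Real.exp (α * max (-(y i + 1 - 1 / n) - c₄ * g) 0) ≤ B * Real.exp (α / n) := by
    rw [← Real.exp_add]
    apply Real.exp_le_exp.2
    have : max (-(y i + 1 - 1 / n) - c₄ * g) 0 ≤ max (-(y i) - c₄ * g) 0 + 1 / n := by
      apply max_le
      · have := le_max_left (-(y i) - c₄ * g) 0; linarith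
      · linarith
    have h' : α * max (-(y i + 1 - 1 / n) - c₄ * g) 0 ≤ α * (max (-(y i) - c₄ * g) 0 + 1 / n) := by
      nlinarith
    calc α * max (-(y i + 1 - 1 / n) - c₄ * g) 0
        ≤ α * (max (-(y i) - c₄ * g) 0 + 1 / n) := h'
      _ = α * max (-(y i) - c₄ * g) 0 + α / n := by ring
  have h4 : Real.exp (α * max (-(y i - 1 / n) - c₄ * g) 0) ≤ B * Real.exp (α / n) := by
    rw [← Real.exp_add]
    apply Real.exp_le_exp.2
    have : max (-(y i - 1 / n) - c₄ * g) 0 ≤ max (-(y i) - c₄ * g) 0 + 1 / n := by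
      apply max_le
      · have := le_max_left (-(y i) - c₄ * g) 0; linarith
      · linarith
    have h' : α * max (-(y i - 1 / n) - c₄ * g) 0 ≤ α * (max (-(y i) - c₄ * g) 0 + 1 / n) := by
      nlinarith
    calc α * max (-(y i - 1 / n) - c₄ * g) 0
        ≤ α * (max (-(y i) - c₄ * g) 0 + 1 / n) := h'
      _ = α * max (-(y i) - c₄ * g) 0 + α / n := by ring
  -- exp linear bounds
  have hea : Real.exp α ≤ 1 + 1.5 * α := exp_le_lin hα0.le hα
  have han : α / n ≤ 1/2 := by
    calc α / n ≤ α / 1 := by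
          apply div_le_div_of_nonneg_left hα0.le one_pos hn1
      _ = α := div_one α
      _ ≤ 1/2 := hα
  have hen : Real.exp (α / n) ≤ 1 + 1.5 * (α / n) := exp_le_lin (by positivity) han
  have hea1 : 1 ≤ Real.exp α := Real.one_le_exp hα0.le
  have hen0 : 0 < Real.exp (α / n) := Real.exp_pos _
  -- r bounds
  have hri0 := hr0 i
  have hri2 : r i ≤ 2 / n := hrmax i
  have hri1 : r i ≤ 1 := by
    rw [← hr1]
    exact Finset.single_le_sum (fun j _ => hr0 j) (Finset.mem_univ i)
  have key1 : r i * Real.exp (α * max (y i + 1 - 1 / n - c₄ * g) 0)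
      + (1 - r i) * Real.exp (α * max (y i - 1 / n - c₄ * g) 0)
      ≤ A * (1 + 3 * α / n) := by
    have : r i * Real.exp (α * max (y i + 1 - 1 / n - c₄ * g) 0)
        + (1 - r i) * Real.exp (α * max (y i - 1 / n - c₄ * g) 0)
        ≤ r i * (A * Real.exp α) + (1 - r i) * A :=
      add_le_add (mul_le_mul_of_nonneg_left h1 hri0)
        (mul_le_mul_of_nonneg_left h3 (by linarith))
    have h2' : r i * (A * Real.exp α) + (1 - r i) * A = A * (1 + r i * (Real.exp α - 1)) := by
      ring
    have h3' : r i * (Real.exp α - 1) ≤ 3 * α / n := by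
      have : r i * (Real.exp α - 1) ≤ (2 / n) * (1.5 * α) := by
        apply mul_le_mul hri2 (by linarith) (by linarith) (by positivity)
      calc r i * (Real.exp α - 1) ≤ (2 / n) * (1.5 * α) := this
        _ = 3 * α / n := by ring
    nlinarith
  have key2 : r i * Real.exp (α * max (-(y i + 1 - 1 / n) - c₄ * g) 0)
      + (1 - r i) * Real.exp (α * max (-(y i - 1 / n) - c₄ * g) 0)
      ≤ B * (1 + 3 * α / n) := by
    have hb : r i * Real.exp (α * max (-(y i + 1 - 1 / n) - c₄ * g) 0)
        + (1 - r i) * Real.exp (α * max (-(y i - 1 / n) - c₄ * g) 0)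
        ≤ r i * (B * Real.exp (α / n)) + (1 - r i) * (B * Real.exp (α / n)) :=
      add_le_add (mul_le_mul_of_nonneg_left h2 hri0)
        (mul_le_mul_of_nonneg_left h4 (by linarith))
    have he : r i * (B * Real.exp (α / n)) + (1 - r i) * (B * Real.exp (α / n))
        = B * Real.exp (α / n) := by ring
    have hB' : B * Real.exp (α / n) ≤ B * (1 + 3 * α / n) := by
      apply mul_le_mul_of_nonneg_left _ hBpos.le
      have h5 : 3 * α / n = 2 * (1.5 * (α / n)) := by ring
      have h6 : 0 ≤ α / n := by positivity
      have : 1.5 * (α / n) ≤ 3 * α / n := by rw [h5]; linarith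
      linarith
    linarith
  linarith [key1, key2]
end
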